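/- arXiv:1302.1227 — 5 statements merged into one kernel-verified Lean document; each statement's English description precedes it below -/
import Mathlib

section
/- Let $a_1,\dots,a_n$ be complex numbers with $\sum_{j=1}^n |a_j|^2 < 1$. Then there exists a holomorphic quadratic polynomial $q(z_1,\dots,z_{n-1})$ (namely $q = -\tfrac{1}{2}a_n\sum_{j=1}^{n-1} z_j^2$ after suitable unimodular rescaling) such that the real quadratic form $H(z,\bar z) = \sum_{j=1}^n |z_j|^2 - 2\,\mathrm{Re}\big(\sum_{j=1}^{n-1} a_j z_j z_n + \tfrac12 a_n z_n^2 + q(z_1,\dots,z_{n-1})\big)$ on $\mathbb{C}^n$ is positive definite. -/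
set_option maxHeartbeats 1000000

open Finset

private lemma key_norm_id (s : ℝ) (α τ w : ℂ) :
    ‖(s:ℂ)*w - (starRingEnd ℂ α)*τ‖^2 + ‖(s:ℂ)*τ + α*w‖^2
      = (s^2+‖α‖^2) * (‖τ‖^2+‖w‖^2) := by
  simp only [Complex.sq_norm, Complex.normSq_apply,
    Complex.sub_re, Complex.sub_im, Complex.add_re, Complex.add_im,
    Complex.mul_re, Complex.mul_im, Complex.conj_re, Complex.conj_im,
    Complex.ofReal_re, Complex.ofReal_im]
  ring

private lemma key2 (s : ℝ) (α τ w : ℂ) :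
    ‖2*((s:ℂ)*τ*w) + α*w^2 - (starRingEnd ℂ α)*τ^2‖^2
      ≤ (s^2+‖α‖^2) * (‖τ‖^2+‖w‖^2)^2 := by
  have hx : 2*((s:ℂ)*τ*w) + α*w^2 - (starRingEnd ℂ α)*τ^2
      = τ*((s:ℂ)*w - (starRingEnd ℂ α)*τ) + w*((s:ℂ)*τ + α*w) := by ring
  set X := (s:ℂ)*w - (starRingEnd ℂ α)*τ with hX
  set Y := (s:ℂ)*τ + α*w with hY
  have h1 : ‖τ*X + w*Y‖ ≤ ‖τ‖*‖X‖ + ‖w‖*‖Y‖ := by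
    calc ‖τ*X + w*Y‖ ≤ ‖τ*X‖ + ‖w*Y‖ := norm_add_le _ _
    _ = ‖τ‖*‖X‖ + ‖w‖*‖Y‖ := by rw [norm_mul, norm_mul]
  have h2 : (‖τ‖*‖X‖ + ‖w‖*‖Y‖)^2 ≤ (‖τ‖^2+‖w‖^2)*(‖X‖^2+‖Y‖^2) := by
    nlinarith [sq_nonneg (‖τ‖*‖Y‖ - ‖w‖*‖X‖)]
  have hid := key_norm_id s α τ w
  rw [hx]
  calc ‖τ*X + w*Y‖^2 ≤ (‖τ‖*‖X‖ + ‖w‖*‖Y‖)^2 := by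
        apply pow_le_pow_left₀ (norm_nonneg _) h1
  _ ≤ (‖τ‖^2+‖w‖^2)*(‖X‖^2+‖Y‖^2) := h2
  _ = (s^2+‖α‖^2) * (‖τ‖^2+‖w‖^2)^2 := by rw [hid]; ring

private lemma cs_complex {n : ℕ} (A z : Fin n → ℂ) :
    ‖∑ j, A j * z j‖^2 ≤ (∑ j, ‖A j‖^2) * (∑ j, ‖z j‖^2) := by
  have h1 : ‖∑ j, A j * z j‖ ≤ ∑ j, ‖A j‖ * ‖z j‖ := by
    calc ‖∑ j, A j * z j‖ ≤ ∑ j, ‖A j * z j‖ := norm_sum_le _ _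
    _ = ∑ j, ‖A j‖ * ‖z j‖ := by simp [norm_mul]
  calc ‖∑ j, A j * z j‖^2 ≤ (∑ j, ‖A j‖ * ‖z j‖)^2 := by
        apply pow_le_pow_left₀ (norm_nonneg _) h1
  _ ≤ (∑ j, ‖A j‖^2) * (∑ j, ‖z j‖^2) := Finset.sum_mul_sq_le_sq_mul_sq _ _ _

/-- Lemma 2.3: if `∑ |a_j|² < 1` then there is a holomorphic quadratic polynomial
`q(z_1,…,z_{n-1})`, given by a coefficient matrix `c`, such that
`∑ |z_j|² - 2 Re(∑_{j<n} a_j z_j z_n + ½ a_n z_n² + q(z'))` is positive definite.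
Variables are indexed by `Fin (n+1)`, with `Fin.last n` playing the role of `z_n`. -/
theorem lemma_2_3 (n : ℕ) (a : Fin (n + 1) → ℂ)
    (ha : ∑ j, ‖a j‖ ^ 2 < 1) :
    ∃ c : Fin n → Fin n → ℂ,
      ∀ z : Fin (n + 1) → ℂ, z ≠ 0 →
        0 < (∑ j, ‖z j‖ ^ 2) -
          2 * ((∑ j : Fin n, a j.castSucc * z j.castSucc * z (Fin.last n))
            + (1 / 2) * a (Fin.last n) * z (Fin.last n) ^ 2
            + ∑ j : Fin n, ∑ k : Fin n, c j k * z j.castSucc * z k.castSucc).re := by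
  set α := a (Fin.last n) with hα
  set s2 := ∑ j : Fin n, ‖a j.castSucc‖^2 with hs2
  have hs2nn : 0 ≤ s2 := Finset.sum_nonneg fun j _ => sq_nonneg _
  have hsplit : ∑ j, ‖a j‖ ^ 2 = s2 + ‖α‖^2 := by
    rw [Fin.sum_univ_castSucc]
  have hrho : s2 + ‖α‖^2 < 1 := by rw [← hsplit]; exact ha
  set s := Real.sqrt s2 with hs
  have hss : s^2 = s2 := Real.sq_sqrt hs2nn
  refine ⟨fun j k => if s2 = 0 then 0 else
      -(starRingEnd ℂ α) / (2*(s2:ℂ)) * a j.castSucc * a k.castSucc, fun z hz => ?_⟩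
  set w := z (Fin.last n) with hw
  set S := ∑ j : Fin n, ‖z j.castSucc‖^2 with hS
  have hSnn : 0 ≤ S := Finset.sum_nonneg fun j _ => sq_nonneg _
  have hWnn : 0 ≤ ‖w‖^2 := sq_nonneg _
  have hzpos : 0 < S + ‖w‖^2 := by
    rw [hS, hw, ← Fin.sum_univ_castSucc (fun j => ‖z j‖^2)]
    obtain ⟨j0, hj0⟩ := Function.ne_iff.mp hz
    have hj0' : z j0 ≠ 0 := by simpa using hj0
    exact Finset.sum_pos' (fun j _ => sq_nonneg _)
      ⟨j0, Finset.mem_univ _, pow_pos (norm_pos_iff.mpr hj0') 2⟩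
  have hztot : ∑ j, ‖z j‖ ^ 2 = S + ‖w‖^2 := by
    rw [hS, hw, Fin.sum_univ_castSucc (fun j => ‖z j‖^2)]
  set ζ := ∑ j : Fin n, a j.castSucc * z j.castSucc with hζ
  have hcs : ‖ζ‖^2 ≤ s2 * S := cs_complex _ _
  have hsum1 : ∑ j : Fin n, a j.castSucc * z j.castSucc * z (Fin.last n) = ζ * w := by
    rw [hζ, Finset.sum_mul]
  rw [hztot, hsum1]
  by_cases h0 : s2 = 0
  · -- degenerate case: all a j.castSucc = 0
    have hA0 : ∀ j : Fin n, a j.castSucc = 0 := by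
      intro j
      have := (Finset.sum_eq_zero_iff_of_nonneg (fun j _ => sq_nonneg ‖a j.castSucc‖)).mp h0
        j (Finset.mem_univ j)
      simpa using this
    have hζ0 : ζ = 0 := by rw [hζ]; exact Finset.sum_eq_zero fun j _ => by rw [hA0 j]; ring
    have hsum2 : ∑ j : Fin n, ∑ k : Fin n,
        (if s2 = 0 then 0 else
          -(starRingEnd ℂ α) / (2*(s2:ℂ)) * a j.castSucc * a k.castSucc)
          * z j.castSucc * z k.castSucc = 0 := by
      simp only [if_pos h0, zero_mul, Finset.sum_const_zero]
    rw [hsum2, hζ0]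
    have hre : ((0:ℂ) * w + 1/2 * α * w^2 + 0).re ≤ ‖(1:ℝ)/2‖ * ‖α‖ * ‖w‖^2 := by
      have h1 : ((0:ℂ) * w + 1/2 * α * w^2 + 0) = 1/2 * α * w^2 := by ring
      rw [h1]
      calc (1/2 * α * w^2).re ≤ ‖1/2 * α * w^2‖ := Complex.re_le_norm _
      _ = ‖(1:ℂ)/2‖ * ‖α‖ * ‖w‖^2 := by rw [norm_mul, norm_mul, norm_pow]
      _ = ‖(1:ℝ)/2‖ * ‖α‖ * ‖w‖^2 := by norm_num
    have hN : ‖α‖^2 < 1 := by rw [h0] at hrho; linarith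
    have hN1 : ‖α‖ < 1 := by nlinarith [norm_nonneg α]
    have hre' : ((0:ℂ) * w + 1/2 * α * w^2 + 0).re ≤ 1/2 * ‖α‖ * ‖w‖^2 := by
      simpa using hre
    nlinarith [mul_nonneg (sub_nonneg.mpr hN1.le) hWnn]
  · -- main case
    have hs2pos : 0 < s2 := lt_of_le_of_ne hs2nn (Ne.symm h0)
    have hspos : 0 < s := Real.sqrt_pos.mpr hs2pos
    have hs2C : (s2:ℂ) ≠ 0 := by exact_mod_cast ne_of_gt hs2pos
    have hsC : (s:ℂ) ≠ 0 := by exact_mod_cast ne_of_gt hspos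
    set K := -(starRingEnd ℂ α) / (2*(s2:ℂ)) with hK
    have hsum2 : ∑ j : Fin n, ∑ k : Fin n,
        (if s2 = 0 then 0 else
          -(starRingEnd ℂ α) / (2*(s2:ℂ)) * a j.castSucc * a k.castSucc)
          * z j.castSucc * z k.castSucc = K * (ζ * ζ) := by
      simp only [if_neg h0, ← hK]
      rw [hζ, Finset.sum_mul_sum, Finset.mul_sum]
      refine Finset.sum_congr rfl fun j _ => ?_
      rw [Finset.mul_sum]
      refine Finset.sum_congr rfl fun k _ => ?_
      ring
    rw [hsum2]
    set τ := ζ / (s:ℂ) with hτ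
    have hτζ : (s:ℂ) * τ = ζ := by rw [hτ]; field_simp
    have hsc : ((s:ℂ))^2 = (s2:ℂ) := by rw [← hss]; push_cast; ring
    set E := ζ * w + 1/2 * α * w^2 + K * (ζ * ζ) with hE
    have hE2 : 2*E = 2*((s:ℂ)*τ*w) + α*w^2 - (starRingEnd ℂ α)*τ^2 := by
      rw [hE, hK, ← hτζ]
      rw [div_mul_eq_mul_div, eq_sub_iff_add_eq]
      field_simp
      rw [← hsc]
      ring
    have hkey := key2 s α τ w
    rw [← hE2] at hkey
    have hnorm2E : ‖2*E‖ = 2*‖E‖ := by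
      rw [norm_mul]; norm_num
    have hτ2 : ‖τ‖^2 ≤ S := by
      have : ‖τ‖^2 = ‖ζ‖^2 / s2 := by
        rw [hτ, norm_div, div_pow, Complex.norm_real, Real.norm_eq_abs,
          abs_of_nonneg hspos.le, hss]
      rw [this, div_le_iff₀ hs2pos]
      calc ‖ζ‖^2 ≤ s2 * S := hcs
      _ = S * s2 := by ring
    have hkey2 : 4*‖E‖^2 ≤ (s2 + ‖α‖^2) * (S + ‖w‖^2)^2 := by
      have h1 : ‖2*E‖^2 = 4*‖E‖^2 := by rw [hnorm2E]; ring
      have h2 : (s^2 + ‖α‖^2) * (‖τ‖^2+‖w‖^2)^2 ≤ (s2 + ‖α‖^2) * (S + ‖w‖^2)^2 := by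
        rw [hss]
        apply mul_le_mul_of_nonneg_left _ (add_nonneg hs2nn (sq_nonneg _))
        apply pow_le_pow_left₀ (add_nonneg (sq_nonneg _) (sq_nonneg _)) (by linarith)
      calc 4*‖E‖^2 = ‖2*E‖^2 := h1.symm
      _ ≤ (s^2 + ‖α‖^2) * (‖τ‖^2+‖w‖^2)^2 := hkey
      _ ≤ _ := h2
    have hre : E.re ≤ ‖E‖ := Complex.re_le_norm _
    nlinarith [norm_nonneg E, hzpos, hkey2, hrho, mul_pos hzpos hzpos,
      mul_nonneg (norm_nonneg E) hzpos.le, sq_nonneg (S + ‖w‖^2 - 2*‖E‖)]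
end

section
/- Let $a_1,\dots,a_n \geq 0$ be real numbers and set $\gamma = \sqrt{\sum_{j=1}^n a_j^2}$. Identify $\mathbb{C}^n$ with $\mathbb{R}^{2n}$ via $z_j = x_j + i y_j$. Then the real quadratic form $H(x,y) = \sum_{j=1}^{n-1}\big[(1+a_n)x_j^2 + (1-a_n)y_j^2 - 2a_j x_j x_n + 2 a_j y_j y_n\big] + (1-a_n)x_n^2 + (1+a_n)y_n^2$ has smallest eigenvalue $1-\gamma$. In particular, if $\gamma < 1$ then $H$ is positive definite. -/
lemma key_sq {m : ℕ} (c u : Fin m → ℝ) (p q t : ℝ)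
    (hp : 0 ≤ p) (hq : 0 ≤ q) (hpq : ∑ j, c j ^ 2 = p * q) :
    0 ≤ (∑ j, (p * u j ^ 2 - 2 * c j * u j * t)) + q * t ^ 2 := by
  rcases hp.eq_or_lt with h | h
  · have hc : ∀ j ∈ Finset.univ, c j ^ 2 = 0 := by
      rw [← Finset.sum_eq_zero_iff_of_nonneg (fun j _ => sq_nonneg (c j))]
      rw [hpq, ← h, zero_mul]
    have : (∑ j, (p * u j ^ 2 - 2 * c j * u j * t)) = 0 := by
      apply Finset.sum_eq_zero
      intro j hj
      have : c j = 0 := by have := hc j hj; nlinarith [this]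
      rw [← h, this]; ring
    rw [this, zero_add]
    positivity
  · have hmul : p * ((∑ j, (p * u j ^ 2 - 2 * c j * u j * t)) + q * t ^ 2)
        = ∑ j, (p * u j - c j * t) ^ 2 := by
      have e : ∀ j ∈ Finset.univ, (p * u j - c j * t) ^ 2
          = p * (p * u j ^ 2 - 2 * c j * u j * t) + c j ^ 2 * t ^ 2 := by
        intro j _; ring
      rw [Finset.sum_congr rfl e, Finset.sum_add_distrib, ← Finset.sum_mul, hpq,
        ← Finset.mul_sum]
      ring
    have h2 : 0 ≤ p * ((∑ j, (p * u j ^ 2 - 2 * c j * u j * t)) + q * t ^ 2) := by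
      rw [hmul]; exact Finset.sum_nonneg fun j _ => sq_nonneg _
    nlinarith [h2]

lemma sum_split {n : ℕ} (b c d e : ℝ) (f g h k : Fin n → ℝ) :
    ∑ j, (b * f j + c * g j + d * h j + e * k j)
      = b * (∑ j, f j) + c * (∑ j, g j) + d * (∑ j, h j) + e * (∑ j, k j) := by
  simp [Finset.sum_add_distrib, Finset.mul_sum]

/-- With `a_j ≥ 0`, `γ = √(∑ a_j²)`, the quadratic form
`H(x,y) = ∑_{j<n} [(1+a_n)x_j² + (1-a_n)y_j² - 2a_j x_j x_n + 2a_j y_j y_n]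
          + (1-a_n)x_n² + (1+a_n)y_n²`
on `ℝ^{2(n+1)}` has smallest eigenvalue `1 - γ` (stated variationally: `1-γ` is a
lower bound of the Rayleigh quotient and is attained); in particular `γ < 1`
implies `H` is positive definite. Indices run over `Fin (n+1)`, with `Fin.last n`
playing the role of the index `n`. -/
theorem smallest_eigenvalue (n : ℕ) (a : Fin (n + 1) → ℝ) (ha : ∀ j, 0 ≤ a j)
    (γ : ℝ) (hγ : γ = Real.sqrt (∑ j, a j ^ 2))
    (H : (Fin (n + 1) → ℝ) → (Fin (n + 1) → ℝ) → ℝ)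
    (hH : H = fun x y =>
      (∑ j : Fin n, ((1 + a (Fin.last n)) * x j.castSucc ^ 2
        + (1 - a (Fin.last n)) * y j.castSucc ^ 2
        - 2 * a j.castSucc * x j.castSucc * x (Fin.last n)
        + 2 * a j.castSucc * y j.castSucc * y (Fin.last n)))
      + (1 - a (Fin.last n)) * x (Fin.last n) ^ 2
      + (1 + a (Fin.last n)) * y (Fin.last n) ^ 2) :
    (∀ x y : Fin (n + 1) → ℝ,
        (1 - γ) * ((∑ j, x j ^ 2) + ∑ j, y j ^ 2) ≤ H x y) ∧
    (∃ x y : Fin (n + 1) → ℝ, ¬(x = 0 ∧ y = 0) ∧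
        H x y = (1 - γ) * ((∑ j, x j ^ 2) + ∑ j, y j ^ 2)) ∧
    (γ < 1 → ∀ x y : Fin (n + 1) → ℝ, ¬(x = 0 ∧ y = 0) → 0 < H x y) := by
  set b := a (Fin.last n) with hbdef
  have hb0 : 0 ≤ b := ha _
  have hsumnn : 0 ≤ ∑ j, a j ^ 2 := Finset.sum_nonneg fun j _ => sq_nonneg _
  have hγ0 : 0 ≤ γ := hγ ▸ Real.sqrt_nonneg _
  have hγ2 : γ ^ 2 = ∑ j, a j ^ 2 := by rw [hγ]; exact Real.sq_sqrt hsumnn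
  have hsplit : (∑ j, a j ^ 2) = (∑ j : Fin n, a j.castSucc ^ 2) + b ^ 2 :=
    Fin.sum_univ_castSucc _
  have hS : (∑ j : Fin n, a j.castSucc ^ 2) = γ ^ 2 - b ^ 2 := by
    rw [hγ2, hsplit]; ring
  have hSnn : 0 ≤ (∑ j : Fin n, a j.castSucc ^ 2) :=
    Finset.sum_nonneg fun j _ => sq_nonneg _
  have hbγ : b ≤ γ := by nlinarith [hS, hSnn]
  -- lower bound
  have lower : ∀ x y : Fin (n + 1) → ℝ,
      (1 - γ) * ((∑ j, x j ^ 2) + ∑ j, y j ^ 2) ≤ H x y := by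
    intro x y
    have hx := key_sq (fun j => a j.castSucc) (fun j => x j.castSucc)
      (γ + b) (γ - b) (x (Fin.last n)) (by linarith) (by linarith)
      (by rw [hS]; ring)
    have hy := key_sq (fun j => -(a j.castSucc)) (fun j => y j.castSucc)
      (γ - b) (γ + b) (y (Fin.last n)) (by linarith) (by linarith)
      (by simp only [neg_sq]; rw [hS]; ring)
    -- rewrite all sums in atom form
    have eH : (∑ j : Fin n, ((1 + b) * x j.castSucc ^ 2
        + (1 - b) * y j.castSucc ^ 2
        - 2 * a j.castSucc * x j.castSucc * x (Fin.last n)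
        + 2 * a j.castSucc * y j.castSucc * y (Fin.last n)))
        = (1 + b) * (∑ j : Fin n, x j.castSucc ^ 2)
          + (1 - b) * (∑ j : Fin n, y j.castSucc ^ 2)
          + (-2 * x (Fin.last n)) * (∑ j : Fin n, a j.castSucc * x j.castSucc)
          + (2 * y (Fin.last n)) * (∑ j : Fin n, a j.castSucc * y j.castSucc) := by
      rw [← sum_split]
      exact Finset.sum_congr rfl fun j _ => by ring
    have ex : (∑ j : Fin n, ((γ + b) * x j.castSucc ^ 2
        - 2 * a j.castSucc * x j.castSucc * x (Fin.last n)))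
        = (γ + b) * (∑ j : Fin n, x j.castSucc ^ 2)
          + 0 * (∑ j : Fin n, y j.castSucc ^ 2)
          + (-2 * x (Fin.last n)) * (∑ j : Fin n, a j.castSucc * x j.castSucc)
          + 0 * (∑ j : Fin n, a j.castSucc * y j.castSucc) := by
      rw [← sum_split]
      exact Finset.sum_congr rfl fun j _ => by ring
    have ey : (∑ j : Fin n, ((γ - b) * y j.castSucc ^ 2
        - 2 * (-(a j.castSucc)) * y j.castSucc * y (Fin.last n)))
        = 0 * (∑ j : Fin n, x j.castSucc ^ 2)
          + (γ - b) * (∑ j : Fin n, y j.castSucc ^ 2)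
          + 0 * (∑ j : Fin n, a j.castSucc * x j.castSucc)
          + (2 * y (Fin.last n)) * (∑ j : Fin n, a j.castSucc * y j.castSucc) := by
      rw [← sum_split]
      exact Finset.sum_congr rfl fun j _ => by ring
    rw [hH]
    simp only []
    rw [Fin.sum_univ_castSucc (f := fun j => x j ^ 2),
        Fin.sum_univ_castSucc (f := fun j => y j ^ 2), eH]
    rw [ex] at hx
    rw [ey] at hy
    linarith [hx, hy]
  refine ⟨lower, ?_, ?_⟩
  · -- equality attained
    rcases eq_or_lt_of_le hγ0 with h0 | h0
    · -- γ = 0 : all a j = 0, take x ≡ 1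
      have hazero : ∀ j, a j = 0 := by
        intro j
        have hsum0 : (∑ j, a j ^ 2) = 0 := by rw [← hγ2, ← h0]; ring
        have := (Finset.sum_eq_zero_iff_of_nonneg
          (fun j (_ : j ∈ Finset.univ) => sq_nonneg (a j))).mp hsum0 j (Finset.mem_univ j)
        exact (pow_eq_zero_iff two_ne_zero).mp this
      refine ⟨fun _ => 1, 0, ?_, ?_⟩
      · rintro ⟨hx, -⟩
        have := congrFun hx (Fin.last n)
        norm_num at this
      · rw [hH]
        simp [hazero, ← h0, ← hbdef, Fin.sum_univ_castSucc (f := fun _ : Fin (n+1) => (1:ℝ))]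
        rw [show b = 0 from hazero _]; ring
    · -- γ > 0 : take x = update a last (γ+b)
      refine ⟨Function.update a (Fin.last n) (γ + b), 0, ?_, ?_⟩
      · rintro ⟨hx, -⟩
        have := congrFun hx (Fin.last n)
        simp [Function.update_self] at this
        linarith
      · rw [hH]
        simp only [Pi.zero_apply, Function.update_self]
        have hup : ∀ j : Fin n,
            Function.update a (Fin.last n) (γ + b) j.castSucc = a j.castSucc :=
          fun j => Function.update_of_ne (Fin.castSucc_lt_last j).ne _ _
        have e1 : (∑ j : Fin n, ((1 + b) * Function.update a (Fin.last n) (γ + b) j.castSucc ^ 2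
            + (1 - b) * (0:ℝ) ^ 2
            - 2 * a j.castSucc * Function.update a (Fin.last n) (γ + b) j.castSucc * (γ + b)
            + 2 * a j.castSucc * 0 * 0))
            = (1 + b - 2 * (γ + b)) * (∑ j : Fin n, a j.castSucc ^ 2) := by
          rw [Finset.mul_sum]
          refine Finset.sum_congr rfl fun j _ => ?_
          rw [hup j]; ring
        have e2 : (∑ j, Function.update a (Fin.last n) (γ + b) j ^ 2)
            = (∑ j : Fin n, a j.castSucc ^ 2) + (γ + b) ^ 2 := by
          rw [Fin.sum_univ_castSucc]
          simp only [Function.update_self]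
          congr 1
          exact Finset.sum_congr rfl fun j _ => by rw [hup j]
        rw [e1, e2, hS]
        simp
        ring
  · -- positive definiteness
    intro hγ1 x y hxy
    have hpos : 0 < (∑ j, x j ^ 2) + ∑ j, y j ^ 2 := by
      rcases lt_or_eq_of_le (by positivity : (0:ℝ) ≤ (∑ j, x j ^ 2) + ∑ j, y j ^ 2) with h | h
      · exact h
      · exfalso
        have hx0 : (∑ j, x j ^ 2) = 0 := by
          have h1 : (0:ℝ) ≤ ∑ j, x j ^ 2 := by positivity
          have h2 : (0:ℝ) ≤ ∑ j, y j ^ 2 := by positivity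
          linarith
        have hy0 : (∑ j, y j ^ 2) = 0 := by
          have h1 : (0:ℝ) ≤ ∑ j, x j ^ 2 := by positivity
          linarith
        apply hxy
        constructor
        · funext j
          have := (Finset.sum_eq_zero_iff_of_nonneg
            (fun j (_ : j ∈ Finset.univ) => sq_nonneg (x j))).mp hx0 j (Finset.mem_univ j)
          simpa using (pow_eq_zero_iff two_ne_zero).mp this
        · funext j
          have := (Finset.sum_eq_zero_iff_of_nonneg
            (fun j (_ : j ∈ Finset.univ) => sq_nonneg (y j))).mp hy0 j (Finset.mem_univ j)
          simpa using (pow_eq_zero_iff two_ne_zero).mp this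
    calc (0:ℝ) < (1 - γ) * ((∑ j, x j ^ 2) + ∑ j, y j ^ 2) := by
          apply mul_pos (by linarith) hpos
      _ ≤ H x y := lower x y
end

section
/- With $a_1,\dots,a_n \geq 0$, $\gamma = \sqrt{\sum a_j^2}$, and $H$ as above: the vector $w = \sum_{j=1}^{n-1} a_j e_{j+n} + (a_n - \gamma)e_{2n}$ is an eigenvector of the symmetric matrix of $H$ with eigenvalue $1-\gamma$, provided $w \neq 0$. -/
open Matrix

/-- The vector `w = ∑_{j<n} a_j e_{j+n} + (a_n - γ) e_{2n}` (supported on the `y`-block)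
is an eigenvector with eigenvalue `1 - γ` of the symmetric matrix `A` of the
quadratic form `H`, provided `w ≠ 0`. Coordinates on `ℝ^{2(n+1)}` are indexed by
`Fin (n+1) ⊕ Fin (n+1)`: `Sum.inl` for the `x`-block, `Sum.inr` for the `y`-block. -/
theorem eigenvector_one_minus_gamma (n : ℕ) (a : Fin (n + 1) → ℝ) (ha : ∀ j, 0 ≤ a j)
    (γ : ℝ) (hγ : γ = Real.sqrt (∑ j, a j ^ 2))
    (A : Matrix (Fin (n + 1) ⊕ Fin (n + 1)) (Fin (n + 1) ⊕ Fin (n + 1)) ℝ)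
    (hsymm : A.IsSymm)
    (hA : ∀ w : Fin (n + 1) ⊕ Fin (n + 1) → ℝ,
      w ⬝ᵥ A.mulVec w =
        (∑ j : Fin n, ((1 + a (Fin.last n)) * (w (Sum.inl j.castSucc)) ^ 2
          + (1 - a (Fin.last n)) * (w (Sum.inr j.castSucc)) ^ 2
          - 2 * a j.castSucc * w (Sum.inl j.castSucc) * w (Sum.inl (Fin.last n))
          + 2 * a j.castSucc * w (Sum.inr j.castSucc) * w (Sum.inr (Fin.last n))))
        + (1 - a (Fin.last n)) * (w (Sum.inl (Fin.last n))) ^ 2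
        + (1 + a (Fin.last n)) * (w (Sum.inr (Fin.last n))) ^ 2)
    (v : Fin (n + 1) ⊕ Fin (n + 1) → ℝ)
    (hv : v = Sum.elim (0 : Fin (n + 1) → ℝ)
      (fun j => if j = Fin.last n then a (Fin.last n) - γ else a j))
    (hv0 : v ≠ 0) :
    A.mulVec v = (1 - γ) • v := by
  have hγ2 : γ ^ 2 = ∑ j, a j ^ 2 := by
    rw [hγ, Real.sq_sqrt]; positivity
  have hne : ∀ j : Fin n, j.castSucc ≠ Fin.last n := fun j => (Fin.castSucc_lt_last j).ne
  have hsum : ∑ x : Fin n, a x.castSucc * a x.castSucc = γ ^ 2 - a (Fin.last n) ^ 2 := by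
    rw [show (∑ x : Fin n, a x.castSucc * a x.castSucc) = ∑ x : Fin n, a x.castSucc ^ 2 from
      Finset.sum_congr rfl fun x _ => (sq (a x.castSucc)).symm]
    rw [hγ2, Fin.sum_univ_castSucc]; ring
  have hsym : ∀ u w : Fin (n+1) ⊕ Fin (n+1) → ℝ, u ⬝ᵥ A.mulVec w = w ⬝ᵥ A.mulVec u := by
    intro u w
    rw [Matrix.dotProduct_mulVec, ← Matrix.mulVec_transpose, hsymm.eq, dotProduct_comm]
  have key : ∀ i, A.mulVec v i = ((v + Pi.single i 1) ⬝ᵥ A.mulVec (v + Pi.single i 1)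
      - v ⬝ᵥ A.mulVec v
      - (Pi.single i 1 : Fin (n+1) ⊕ Fin (n+1) → ℝ) ⬝ᵥ A.mulVec (Pi.single i 1)) / 2 := by
    intro i
    have h1 : (Pi.single i 1 : Fin (n+1) ⊕ Fin (n+1) → ℝ) ⬝ᵥ A.mulVec v = A.mulVec v i := by
      rw [single_dotProduct, one_mul]
    rw [Matrix.mulVec_add, add_dotProduct, dotProduct_add, dotProduct_add,
      hsym v (Pi.single i 1), h1]
    ring
  funext i
  rw [key i, hA, hA, hA]
  subst hv
  rcases i with i | i
  · simp only [Pi.add_apply, Sum.elim_inl, Sum.elim_inr, Pi.zero_apply, Pi.single_apply,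
      Sum.inl.injEq, Sum.inr.injEq, reduceCtorEq, if_false, if_neg (hne _), if_true, add_zero,
      zero_add, Pi.smul_apply, smul_eq_mul, mul_zero, zero_pow, sub_zero, ne_eq,
      OfNat.ofNat_ne_zero, not_false_eq_true, one_pow, mul_one, zero_mul]
    have h1 : ∑ x : Fin n,
        (((1 + a (Fin.last n)) * (if x.castSucc = i then (1:ℝ) else 0) ^ 2 +
          (1 - a (Fin.last n)) * a x.castSucc ^ 2 -
          (2 * a x.castSucc * if x.castSucc = i then (1:ℝ) else 0) *
            if Fin.last n = i then (1:ℝ) else 0) +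
          2 * a x.castSucc * a x.castSucc * (a (Fin.last n) - γ)) =
        (∑ x : Fin n, ((1 - a (Fin.last n)) * a x.castSucc ^ 2 +
          2 * a x.castSucc * a x.castSucc * (a (Fin.last n) - γ)))
        + ∑ x : Fin n, ((1 + a (Fin.last n)) * (if x.castSucc = i then (1:ℝ) else 0) ^ 2 -
          (2 * a x.castSucc * if x.castSucc = i then (1:ℝ) else 0) *
            if Fin.last n = i then (1:ℝ) else 0) := by
      rw [← Finset.sum_add_distrib]
      exact Finset.sum_congr rfl fun x _ => by ring
    rw [h1]; ring
  · induction i using Fin.lastCases with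
    | last =>
      simp only [Pi.add_apply, Sum.elim_inl, Sum.elim_inr, Pi.zero_apply, Pi.single_apply,
        Sum.inl.injEq, Sum.inr.injEq, reduceCtorEq, if_false, if_neg (hne _), if_true, add_zero,
        zero_add, Pi.smul_apply, smul_eq_mul, mul_zero, zero_pow, sub_zero, ne_eq,
        OfNat.ofNat_ne_zero, not_false_eq_true, one_pow, mul_one, zero_mul,
        Finset.sum_const_zero]
      have h2 : ∑ x : Fin n, ((1 - a (Fin.last n)) * a x.castSucc ^ 2 +
          2 * a x.castSucc * a x.castSucc * (a (Fin.last n) - γ + 1)) =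
          (∑ x : Fin n, ((1 - a (Fin.last n)) * a x.castSucc ^ 2 +
            2 * a x.castSucc * a x.castSucc * (a (Fin.last n) - γ)))
          + 2 * ∑ x : Fin n, a x.castSucc * a x.castSucc := by
        rw [Finset.mul_sum, ← Finset.sum_add_distrib]
        exact Finset.sum_congr rfl fun x _ => by ring
      rw [h2, hsum]; ring
    | cast i =>
      simp only [Pi.add_apply, Sum.elim_inl, Sum.elim_inr, Pi.zero_apply, Pi.single_apply,
        Sum.inl.injEq, Sum.inr.injEq, reduceCtorEq, if_false, if_neg (hne _), if_true, add_zero,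
        zero_add, Pi.smul_apply, smul_eq_mul, mul_zero, zero_pow, sub_zero, ne_eq,
        OfNat.ofNat_ne_zero, not_false_eq_true, one_pow, mul_one, zero_mul,
        Fin.castSucc_inj, if_neg (Ne.symm (hne i)), Finset.sum_const_zero]
      have h3 : ∑ x : Fin n,
          ((1 - a (Fin.last n)) * (a x.castSucc + if x = i then (1:ℝ) else 0) ^ 2 +
            2 * a x.castSucc * (a x.castSucc + if x = i then (1:ℝ) else 0) *
              (a (Fin.last n) - γ)) =
          (∑ x : Fin n, ((1 - a (Fin.last n)) * a x.castSucc ^ 2 +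
            2 * a x.castSucc * a x.castSucc * (a (Fin.last n) - γ)))
          + ∑ x : Fin n, (if x = i then
              (1 - a (Fin.last n)) * (2 * a x.castSucc + 1) +
                2 * a x.castSucc * (a (Fin.last n) - γ) else 0) := by
        rw [← Finset.sum_add_distrib]
        refine Finset.sum_congr rfl fun x _ => ?_
        by_cases h : x = i
        · simp only [h, if_true]; ring
        · simp only [h, if_false]; ring
      have h4 : ∑ x : Fin n, (1 - a (Fin.last n)) * (if x = i then (1:ℝ) else 0) ^ 2 =
          ∑ x : Fin n, (if x = i then (1 - a (Fin.last n)) else 0) := by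
        refine Finset.sum_congr rfl fun x _ => ?_
        by_cases h : x = i
        · simp [h]
        · simp [h]
      rw [h3, h4, Finset.sum_ite_eq', Finset.sum_ite_eq']
      simp only [Finset.mem_univ, if_true]
      ring
end

section
/- Let $f: U \to \mathbb{C}$ be holomorphic on a connected open neighborhood $U$ of $0 \in \mathbb{C}^n$, and suppose $u(z) = F(z)/f(z) + G(z)\log f(z) + H(z)$ extends to a (single-valued) holomorphic function in a neighborhood of $0$, where $F, G, H$ are holomorphic near $0$, $f(0) = 0$, $\partial f(0) \neq 0$, and $\log$ is a fixed branch defined off $\{f = 0\}$ on a simply connected subdomain. Then $G \equiv 0$ near $0$ and $F$ is divisible by $f$ near $0$. -/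
open Metric Set Filter Complex Topology Real

noncomputable section

/-- Zero set of a nontrivial holomorphic function on a connected open set is countable. -/
lemma aux_countable_zero {Δ : Set ℂ} (hΔo : IsOpen Δ) (hΔc : IsPreconnected Δ)
    {q : ℂ → ℂ} (hq : DifferentiableOn ℂ q Δ) {t₁ : ℂ} (ht₁ : t₁ ∈ Δ) (hq₁ : q t₁ ≠ 0) :
    {t | t ∈ Δ ∧ q t = 0}.Countable := by
  set S := {t | t ∈ Δ ∧ q t = 0} with hSdef
  have hqa : AnalyticOnNhd ℂ q Δ := hq.analyticOnNhd hΔo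
  have hdisc : DiscreteTopology S := by
    rw [discreteTopology_subtype_iff]
    intro x hx
    rcases (hqa x hx.1).eventually_eq_zero_or_eventually_ne_zero with hc | hc
    · exact absurd (hqa.eqOn_zero_of_preconnected_of_eventuallyEq_zero hΔc hx.1 hc ht₁) hq₁
    · rw [Filter.inf_principal_eq_bot]
      filter_upwards [hc] with z hz hzS
      exact hz hzS.2
  have : Countable S := TopologicalSpace.separableSpace_iff_countable.mp inferInstance
  exact Set.countable_coe_iff.mp this

/-- A ball minus a countable set is connected. -/
lemma aux_conn (c : ℂ) {r : ℝ} (hr : 0 < r) {S : Set ℂ} (hS : S.Countable) :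
    IsConnected (Metric.ball c r \ S) := by
  set e := OpenPartialHomeomorph.univBall c r with he
  have hcont : Continuous e := OpenPartialHomeomorph.continuous_univBall c r
  have hinj : Function.Injective e := by
    have h1 := e.injOn
    rw [OpenPartialHomeomorph.univBall_source] at h1
    exact Set.injOn_univ.mp h1
  have hrange : Set.range e = Metric.ball c r := by
    rw [← Set.image_univ, ← OpenPartialHomeomorph.univBall_source c r, e.image_source_eq_target,
      OpenPartialHomeomorph.univBall_target c hr]
  have hpre : ((e : ℂ → ℂ) ⁻¹' S).Countable := hS.preimage hinj
  have hrank : 1 < Module.rank ℝ ℂ := by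
    rw [Complex.rank_real_complex]; norm_num
  have hpc : IsPathConnected (((e : ℂ → ℂ) ⁻¹' S)ᶜ) :=
    hpre.isPathConnected_compl_of_one_lt_rank hrank
  have himg : (e : ℂ → ℂ) '' ((e : ℂ → ℂ) ⁻¹' S)ᶜ = Metric.ball c r \ S := by
    rw [← Set.preimage_compl, Set.image_preimage_eq_inter_range, hrange, Set.diff_eq,
      Set.inter_comm]
  have := hpc.image hcont
  rw [himg] at this
  exact this.isConnected

/-- Identity theorem for complex-differentiable functions on a connected open subset of a
complex normed space, via slicing along complex lines. -/
lemma aux_identity {E : Type*} [NormedAddCommGroup E] [NormedSpace ℂ E]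
    {U : Set E} (hU : IsOpen U) (hUc : IsPreconnected U)
    {G : E → ℂ} (hG : DifferentiableOn ℂ G U)
    {V : Set E} (hV : IsOpen V) (hVne : V.Nonempty) (hVU : V ⊆ U)
    (hGV : ∀ z ∈ V, G z = 0) : ∀ z ∈ U, G z = 0 := by
  set A : Set E := {z | ∀ᶠ w in 𝓝 z, G w = 0} with hAdef
  have hAo : IsOpen A := isOpen_setOf_eventually_nhds
  have hUA : U ⊆ A := by
    apply hUc.subset_of_closure_inter_subset hAo
    · obtain ⟨z0, hz0⟩ := hVne
      refine ⟨z0, hVU hz0, ?_⟩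
      show ∀ᶠ w in 𝓝 z0, G w = 0
      filter_upwards [hV.mem_nhds hz0] with w hw using hGV w hw
    · rintro x ⟨hxcl, hxU⟩
      obtain ⟨r, hr, hball⟩ : ∃ r > 0, Metric.ball x r ⊆ U :=
        Metric.mem_nhds_iff.mp (hU.mem_nhds hxU)
      obtain ⟨y, hyA, hyball⟩ : ∃ y, y ∈ A ∧ y ∈ Metric.ball x (r / 4) := by
        obtain ⟨y, hy⟩ := mem_closure_iff.mp hxcl (Metric.ball x (r / 4))
          Metric.isOpen_ball (Metric.mem_ball_self (by linarith))
        exact ⟨y, hy.2, hy.1⟩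
      have hzero : ∀ z ∈ Metric.ball x (r / 4), G z = 0 := by
        intro z hz
        set u : E := z - y with hu
        set γ : ℂ → E := fun t => y + t • u with hγ
        have h1 : ‖y - x‖ < r / 4 := by
          rw [← dist_eq_norm]; exact hyball
        have h2 : ‖z - x‖ < r / 4 := by
          rw [← dist_eq_norm]; exact hz
        have h3 : ‖u‖ < r / 2 := by
          have : z - y = (z - x) - (y - x) := by abel
          rw [hu, this]
          calc ‖(z - x) - (y - x)‖ ≤ ‖z - x‖ + ‖y - x‖ := norm_sub_le _ _
          _ < r / 2 := by linarith
        have hγmap : ∀ t : ℂ, ‖t‖ < 3 / 2 → γ t ∈ Metric.ball x r := by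
          intro t ht
          have h4 : ‖y + t • u - x‖ ≤ ‖y - x‖ + ‖t‖ * ‖u‖ := by
            have : y + t • u - x = (y - x) + t • u := by abel
            rw [this]
            calc ‖(y - x) + t • u‖ ≤ ‖y - x‖ + ‖t • u‖ := norm_add_le _ _
            _ = ‖y - x‖ + ‖t‖ * ‖u‖ := by rw [norm_smul]
          have h5 : ‖t‖ * ‖u‖ ≤ (3 / 2) * ‖u‖ :=
            mul_le_mul_of_nonneg_right ht.le (norm_nonneg u)
          rw [Metric.mem_ball, dist_eq_norm]
          nlinarith [norm_nonneg u]
        have hγd : Differentiable ℂ γ :=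
          (differentiable_const _).add (differentiable_id.smul_const u)
        set Δ2 : Set ℂ := Metric.ball (0 : ℂ) (3 / 2) with hΔ2
        have hq : DifferentiableOn ℂ (fun t => G (γ t)) Δ2 :=
          hG.comp hγd.differentiableOn
            (fun t ht => hball (hγmap t (mem_ball_zero_iff.mp ht)))
        have hqa : AnalyticOnNhd ℂ (fun t => G (γ t)) Δ2 :=
          hq.analyticOnNhd Metric.isOpen_ball
        have h0Δ2 : (0 : ℂ) ∈ Δ2 := Metric.mem_ball_self (by norm_num)
        have h1Δ2 : (1 : ℂ) ∈ Δ2 := by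
          rw [hΔ2, mem_ball_zero_iff]
          norm_num
        have hγ0 : γ 0 = y := by simp [hγ]
        have hev : ∀ᶠ t in 𝓝 (0 : ℂ), G (γ t) = 0 := by
          have hγc : Filter.Tendsto γ (𝓝 0) (𝓝 y) := by
            have := hγd.continuous.continuousAt (x := (0 : ℂ))
            rwa [ContinuousAt, hγ0] at this
          exact hγc.eventually hyA
        have heq := hqa.eqOn_zero_of_preconnected_of_eventuallyEq_zero
          (convex_ball (0 : ℂ) (3 / 2)).isPreconnected h0Δ2 hev h1Δ2
        have hγ1 : γ 1 = z := by
          rw [hγ]; simp [hu]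
        rw [← hγ1]
        exact heq
      show ∀ᶠ w in 𝓝 x, G w = 0
      filter_upwards [Metric.isOpen_ball.mem_nhds
        (Metric.mem_ball_self (show (0:ℝ) < r / 4 by linarith))] with w hw using hzero w hw
  intro z hz
  exact (hUA hz).self_of_nhds

/-- Zeros of a holomorphic function persist on nearby parallel slices
(via the maximum principle). -/
lemma aux_zero {E : Type*} [NormedAddCommGroup E] [NormedSpace ℂ E]
    {U' : Set E} (hU' : IsOpen U') (h0U : (0 : E) ∈ U')
    {f : E → ℂ} (hf : DifferentiableOn ℂ f U') (hf0 : f 0 = 0)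
    {v : E} (hv : fderiv ℂ f 0 v ≠ 0) {r : ℝ} (hr : 0 < r) :
    ∀ᶠ z in 𝓝 (0 : E), ∃ t : ℂ, ‖t‖ < r ∧ f (z + t • v) = 0 := by
  set φ₀ : ℂ → ℂ := fun t => f (t • v) with hφ₀
  have hlined : Differentiable ℂ (fun t : ℂ => t • v) := differentiable_id.smul_const v
  set Uball : Set ℂ := (fun t : ℂ => t • v) ⁻¹' U' with hUball
  have hUballo : IsOpen Uball := hU'.preimage hlined.continuous
  have h0Uball : (0 : ℂ) ∈ Uball := by
    show (0 : ℂ) • v ∈ U'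
    rw [zero_smul]; exact h0U
  have hφ₀d : DifferentiableOn ℂ φ₀ Uball :=
    hf.comp hlined.differentiableOn (fun t ht => ht)
  have hφ₀a : AnalyticAt ℂ φ₀ 0 := hφ₀d.analyticAt (hUballo.mem_nhds h0Uball)
  have hder : HasDerivAt φ₀ (fderiv ℂ f 0 v) 0 := by
    have h1 : HasFDerivAt f (fderiv ℂ f 0) ((0 : ℂ) • v) := by
      rw [zero_smul]
      exact (hf.differentiableAt (hU'.mem_nhds h0U)).hasFDerivAt
    have h2 : HasDerivAt (fun t : ℂ => t • v) ((1 : ℂ) • v) 0 :=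
      (hasDerivAt_id 0).smul_const v
    have := h1.comp_hasDerivAt 0 h2
    simpa [Function.comp_def] using this
  have hnotev : ¬ ∀ᶠ t in 𝓝 (0 : ℂ), φ₀ t = 0 := by
    intro hev
    have h1 : deriv φ₀ 0 = deriv (fun _ : ℂ => (0 : ℂ)) 0 :=
      Filter.EventuallyEq.deriv_eq hev
    rw [deriv_const] at h1
    rw [hder.deriv] at h1
    exact hv h1
  have hne : ∀ᶠ t in 𝓝[≠] (0 : ℂ), φ₀ t ≠ 0 := by
    rcases hφ₀a.eventually_eq_zero_or_eventually_ne_zero with hc | hc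
    · exact absurd hc hnotev
    · exact hc
  have hcomb : ∀ᶠ t in 𝓝 (0 : ℂ), (t ≠ 0 → φ₀ t ≠ 0) ∧ t ∈ Uball := by
    have h1 := eventually_nhdsWithin_iff.mp hne
    refine (h1.mono ?_).and (hUballo.mem_nhds h0Uball)
    intro t ht hne0
    exact ht hne0
  obtain ⟨r₁, hr₁pos, hball₁⟩ := Metric.eventually_nhds_iff_ball.mp hcomb
  set ρ : ℝ := min (r₁ / 2) (r / 2) with hρdef
  have hρpos : 0 < ρ := lt_min (by linarith) (by linarith)
  have hρr₁ : ρ < r₁ := lt_of_le_of_lt (min_le_left _ _) (by linarith)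
  have hρr : ρ < r := lt_of_le_of_lt (min_le_right _ _) (by linarith)
  have hsphsub : Metric.sphere (0 : ℂ) ρ ⊆ Metric.ball (0 : ℂ) r₁ := by
    intro t ht
    rw [mem_ball_zero_iff, mem_sphere_zero_iff_norm.mp ht]
    exact hρr₁
  have hcbsub : Metric.closedBall (0 : ℂ) ρ ⊆ Metric.ball (0 : ℂ) r₁ := by
    intro t ht
    rw [Metric.mem_closedBall] at ht
    rw [Metric.mem_ball]
    linarith
  have hsphne : (Metric.sphere (0 : ℂ) ρ).Nonempty := by
    refine ⟨(ρ : ℂ), ?_⟩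
    simp [abs_of_pos hρpos]
  obtain ⟨ζ₀, hζ₀, hmin⟩ := (isCompact_sphere (0 : ℂ) ρ).exists_isMinOn hsphne
    ((hφ₀d.continuousOn.mono (fun t ht => (hball₁ t (hsphsub ht)).2)).norm)
  set δ : ℝ := ‖φ₀ ζ₀‖ with hδdef
  have hζ₀ne : ζ₀ ≠ 0 := by
    intro h0
    rw [h0] at hζ₀
    rw [mem_sphere_zero_iff_norm] at hζ₀
    simp at hζ₀
    linarith
  have hδpos : 0 < δ := by
    rw [hδdef, norm_pos_iff]
    exact (hball₁ ζ₀ (hsphsub hζ₀)).1 hζ₀ne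
  -- eventual facts about z
  have htube : ∀ᶠ z in 𝓝 (0 : E), ∀ t ∈ Metric.sphere (0 : ℂ) ρ,
      ‖f (z + t • v) - φ₀ t‖ < δ / 2 := by
    apply (isCompact_sphere (0 : ℂ) ρ).eventually_forall_of_forall_eventually
    intro t ht
    have htU : (0 : E) + t • v ∈ U' := by
      rw [zero_add]
      exact (hball₁ t (hsphsub ht)).2
    have hmapc : Continuous (fun p : E × ℂ => p.1 + p.2 • v) :=
      continuous_fst.add (continuous_snd.smul continuous_const)
    have hfc : ContinuousAt f ((0 : E) + t • v) :=
      (hf.differentiableAt (hU'.mem_nhds htU)).continuousAt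
    have hc : ContinuousAt (fun p : E × ℂ => f (p.1 + p.2 • v) - φ₀ p.2) ((0 : E), t) := by
      apply ContinuousAt.sub
      · exact ContinuousAt.comp (x := ((0 : E), t)) (g := f)
          (f := fun p : E × ℂ => p.1 + p.2 • v) hfc hmapc.continuousAt
      · have hφ₀c : ContinuousAt φ₀ t := by
          apply ContinuousAt.comp
          · show ContinuousAt f (t • v)
            have : t • v ∈ U' := by rw [← zero_add (t • v)]; exact htU
            exact (hf.differentiableAt (hU'.mem_nhds this)).continuousAt
          · exact hlined.continuous.continuousAt
        exact ContinuousAt.comp (x := ((0 : E), t)) (g := φ₀) (f := Prod.snd) hφ₀c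
            continuous_snd.continuousAt
    have hval : f ((0 : E) + t • v) - φ₀ t = 0 := by
      rw [zero_add]
      simp [hφ₀]
    have htend : Filter.Tendsto (fun p : E × ℂ => f (p.1 + p.2 • v) - φ₀ p.2)
        (𝓝 ((0 : E), t)) (𝓝 0) := by
      have := hc.tendsto
      rwa [hval] at this
    have := htend (Metric.ball_mem_nhds (0 : ℂ) (by linarith : (0:ℝ) < δ / 2))
    filter_upwards [this] with p hp
    rw [Set.mem_preimage, mem_ball_zero_iff] at hp
    exact hp
  have hmaps : ∀ᶠ z in 𝓝 (0 : E), ∀ t ∈ Metric.closedBall (0 : ℂ) ρ,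
      z + t • v ∈ U' := by
    apply (isCompact_closedBall (0 : ℂ) ρ).eventually_forall_of_forall_eventually
    intro t ht
    have htU : (0 : E) + t • v ∈ U' := by
      rw [zero_add]
      exact (hball₁ t (hcbsub ht)).2
    have hmapc : Continuous (fun p : E × ℂ => p.1 + p.2 • v) :=
      continuous_fst.add (continuous_snd.smul continuous_const)
    exact hmapc.continuousAt.preimage_mem_nhds (hU'.mem_nhds htU)
  have hsmall : ∀ᶠ z in 𝓝 (0 : E), ‖f z‖ < δ / 2 := by
    have hfc0 : ContinuousAt f 0 := (hf.differentiableAt (hU'.mem_nhds h0U)).continuousAt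
    have htend : Filter.Tendsto f (𝓝 (0 : E)) (𝓝 0) := by
      have := hfc0.tendsto
      rwa [hf0] at this
    have := htend (Metric.ball_mem_nhds (0 : ℂ) (by linarith : (0:ℝ) < δ / 2))
    filter_upwards [this] with z hz
    rw [Set.mem_preimage, mem_ball_zero_iff] at hz
    exact hz
  filter_upwards [htube, hmaps, hsmall] with z hz1 hz3 hz2
  by_contra hno
  push_neg at hno
  set φz : ℂ → ℂ := fun t => f (z + t • v) with hφz
  have hnz : ∀ t : ℂ, ‖t‖ ≤ ρ → φz t ≠ 0 := by
    intro t ht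
    exact hno t (lt_of_le_of_lt ht hρr)
  have hφzd : DifferentiableOn ℂ φz (Metric.closedBall (0 : ℂ) ρ) := by
    apply hf.comp
    · exact ((differentiable_const z).add (differentiable_id.smul_const v)).differentiableOn
    · intro t ht
      exact hz3 t ht
  set inv : ℂ → ℂ := fun t => (φz t)⁻¹ with hinv
  have hinvd : DiffContOnCl ℂ inv (Metric.ball (0 : ℂ) ρ) := by
    constructor
    · apply DifferentiableOn.inv
      · exact hφzd.mono Metric.ball_subset_closedBall
      · intro t ht
        exact hnz t (le_of_lt (mem_ball_zero_iff.mp ht))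
    · rw [closure_ball (0 : ℂ) hρpos.ne']
      apply ContinuousOn.inv₀
      · exact hφzd.continuousOn
      · intro t ht
        exact hnz t (mem_closedBall_zero_iff.mp ht)
  obtain ⟨ζ, hζfr, hmax⟩ := Complex.exists_mem_frontier_isMaxOn_norm
    (U := Metric.ball (0 : ℂ) ρ) Metric.isBounded_ball ⟨0, Metric.mem_ball_self hρpos⟩ hinvd
  rw [frontier_ball (0 : ℂ) hρpos.ne'] at hζfr
  have h0mem : (0 : ℂ) ∈ closure (Metric.ball (0 : ℂ) ρ) := by
    rw [closure_ball (0 : ℂ) hρpos.ne']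
    exact Metric.mem_closedBall_self hρpos.le
  have hle : ‖inv 0‖ ≤ ‖inv ζ‖ := hmax h0mem
  have hζρ : ‖ζ‖ = ρ := mem_sphere_zero_iff_norm.mp hζfr
  have hφzζpos : 0 < ‖φz ζ‖ := norm_pos_iff.mpr (hnz ζ hζρ.le)
  have hφz0pos : 0 < ‖φz 0‖ := norm_pos_iff.mpr (hnz 0 (by simp [hρpos.le]))
  have hle2 : ‖φz ζ‖ ≤ ‖φz 0‖ := by
    rw [hinv] at hle
    simp only [norm_inv] at hle
    exact (inv_le_inv₀ hφz0pos hφzζpos).mp hle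
  have hub : ‖φz 0‖ < δ / 2 := by
    have : φz 0 = f z := by simp [hφz]
    rw [this]
    exact hz2
  have hlb : δ / 2 < ‖φz ζ‖ := by
    have hδζ : δ ≤ ‖φ₀ ζ‖ := hmin hζfr
    have hclose : ‖φz ζ - φ₀ ζ‖ < δ / 2 := hz1 ζ hζfr
    have : ‖φ₀ ζ‖ - ‖φz ζ‖ ≤ ‖φz ζ - φ₀ ζ‖ := by
      rw [norm_sub_rev]
      exact norm_sub_norm_le _ _
    linarith
  linarith

/-- Fundamental theorem of calculus on a circle: the integral of a derivative of a
holomorphic function vanishes. -/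
lemma aux_circle_deriv_zero {g : ℂ → ℂ} {Ω : Set ℂ} (hΩ : IsOpen Ω)
    (hg : DifferentiableOn ℂ g Ω) {c : ℂ} {ρ : ℝ} (hρ : 0 < ρ)
    (hsub : Metric.sphere c ρ ⊆ Ω) : (∮ z in C(c, ρ), deriv g z) = 0 := by
  have hga : AnalyticOnNhd ℂ g Ω := hg.analyticOnNhd hΩ
  have hgc : ContinuousOn (deriv g) Ω := (hga.deriv).continuousOn
  have hmem : ∀ θ : ℝ, circleMap c ρ θ ∈ Ω := fun θ => hsub (circleMap_mem_sphere c hρ.le θ)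
  have key : ∀ θ ∈ Set.uIcc (0 : ℝ) (2 * π), HasDerivAt (fun θ : ℝ => g (circleMap c ρ θ))
      (deriv g (circleMap c ρ θ) * (circleMap 0 ρ θ * I)) θ := by
    intro θ _
    have h1 : HasDerivAt (circleMap c ρ) (circleMap 0 ρ θ * I) θ := hasDerivAt_circleMap c ρ θ
    have h2 : HasDerivAt g (deriv g (circleMap c ρ θ)) (circleMap c ρ θ) :=
      (hg.differentiableAt (hΩ.mem_nhds (hmem θ))).hasDerivAt
    exact h2.comp θ h1
  have hint : IntervalIntegrable
      (fun θ : ℝ => deriv g (circleMap c ρ θ) * (circleMap 0 ρ θ * I))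
      MeasureTheory.volume 0 (2 * π) := by
    apply ContinuousOn.intervalIntegrable
    apply ContinuousOn.mul
    · exact hgc.comp (continuous_circleMap c ρ).continuousOn (fun θ _ => hmem θ)
    · exact ((continuous_circleMap 0 ρ).mul continuous_const).continuousOn
  have hFTC := intervalIntegral.integral_eq_sub_of_hasDerivAt key hint
  have hper : circleMap c ρ (2 * π) = circleMap c ρ 0 := by
    simp only [circleMap]
    norm_num [Complex.ofReal_mul, Complex.exp_two_pi_mul_I]
  rw [hper, sub_self] at hFTC
  rw [circleIntegral]
  simp only [deriv_circleMap, smul_eq_mul]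
  rw [show (∫ θ in (0:ℝ)..2 * π, circleMap 0 ρ θ * I * deriv g (circleMap c ρ θ))
      = ∫ θ in (0:ℝ)..2 * π, deriv g (circleMap c ρ θ) * (circleMap 0 ρ θ * I) from
    intervalIntegral.integral_congr (fun θ _ => by ring)]
  exact hFTC

/-- If `u = F/f + G log f + H` (with `F, G, H` holomorphic near `0`, `f(0) = 0`,
`∂f(0) ≠ 0`, and `log f` a fixed holomorphic branch `L` on a simply connected
subdomain `D` avoiding `{f = 0}` accumulating at `0`) extends to a single-valued
holomorphic function `h` on a neighborhood `W` of `0`, then `G ≡ 0` near `0` and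
`F` is divisible by `f` near `0`. -/
theorem no_extension_unless_trivial (n : ℕ)
    (U : Set (Fin n → ℂ)) (hU : IsOpen U) (hUconn : IsConnected U)
    (h0U : (0 : Fin n → ℂ) ∈ U)
    (f F G H : (Fin n → ℂ) → ℂ)
    (hf : DifferentiableOn ℂ f U) (hF : DifferentiableOn ℂ F U)
    (hG : DifferentiableOn ℂ G U) (hH : DifferentiableOn ℂ H U)
    (hf0 : f 0 = 0) (hdf : fderiv ℂ f 0 ≠ 0)
    (D : Set (Fin n → ℂ)) (hD : IsOpen D) (hDU : D ⊆ U)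
    (hDconn : IsConnected D) (hDsc : SimplyConnectedSpace D)
    (hDf : ∀ z ∈ D, f z ≠ 0) (h0D : (0 : Fin n → ℂ) ∈ closure D)
    (L : (Fin n → ℂ) → ℂ) (hL : DifferentiableOn ℂ L D)
    (hLf : ∀ z ∈ D, Complex.exp (L z) = f z)
    (W : Set (Fin n → ℂ)) (hW : W ∈ nhds (0 : Fin n → ℂ))
    (h : (Fin n → ℂ) → ℂ) (hh : DifferentiableOn ℂ h W)
    (hext : ∀ z ∈ W ∩ D, h z = F z / f z + G z * L z + H z) :
    (∀ᶠ z in nhds (0 : Fin n → ℂ), G z = 0) ∧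
    ∃ W' ∈ nhds (0 : Fin n → ℂ), ∃ F₁ : (Fin n → ℂ) → ℂ,
      DifferentiableOn ℂ F₁ W' ∧ ∀ z ∈ W', F z = f z * F₁ z := by
  classical
  -- an ambient ball around 0 inside U ∩ W
  obtain ⟨ε, hε, hball⟩ : ∃ ε > 0, Metric.ball (0 : Fin n → ℂ) ε ⊆ U ∩ W := by
    have hUW : U ∩ W ∈ 𝓝 (0 : Fin n → ℂ) := Filter.inter_mem (hU.mem_nhds h0U) hW
    exact Metric.mem_nhds_iff.mp hUW
  set B : Set (Fin n → ℂ) := Metric.ball 0 ε with hBdef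
  have hBU : B ⊆ U := fun z hz => (hball hz).1
  have hBW : B ⊆ W := fun z hz => (hball hz).2
  -- a direction transverse to the zero locus
  obtain ⟨v, hv⟩ : ∃ v, fderiv ℂ f 0 v ≠ 0 := by
    by_contra hcon; push_neg at hcon
    exact hdf (ContinuousLinearMap.ext fun v => by simpa using hcon v)
  set R : ℝ := (ε / 2) / (‖v‖ + 1) with hRdef
  have hv1 : (0:ℝ) < ‖v‖ + 1 := by positivity
  have hRpos : 0 < R := div_pos (by linarith) hv1
  have hzeros := aux_zero hU h0U hf hf0 hv hRpos
  have hN : {z : Fin n → ℂ | ∃ t : ℂ, ‖t‖ < R ∧ f (z + t • v) = 0} ∩ Metric.ball 0 (ε / 2)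
      ∈ 𝓝 (0 : Fin n → ℂ) :=
    Filter.inter_mem hzeros (Metric.ball_mem_nhds _ (by linarith))
  obtain ⟨N', hN'sub, hN'open, h0N'⟩ := _root_.mem_nhds_iff.mp hN
  by_cases hcase : ∀ z ∈ D ∩ N', G z = 0
  · -- G vanishes identically near 0 in D, hence on U
    obtain ⟨z₂, hz₂N, hz₂D⟩ : ∃ z₂, z₂ ∈ N' ∧ z₂ ∈ D := by
      obtain ⟨z₂, hz₂⟩ := mem_closure_iff.mp h0D N' hN'open h0N'
      exact ⟨z₂, hz₂.1, hz₂.2⟩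
    have hGU : ∀ z ∈ U, G z = 0 :=
      aux_identity hU hUconn.isPreconnected hG (hD.inter hN'open) ⟨z₂, hz₂D, hz₂N⟩
        (fun z hz => hDU hz.1) hcase
    constructor
    · filter_upwards [hU.mem_nhds h0U] with z hz using hGU z hz
    · refine ⟨B, Metric.ball_mem_nhds _ hε, fun z => h z - H z,
        (hh.mono hBW).sub (hH.mono hBU), ?_⟩
      obtain ⟨z₃, hz₃B, hz₃D⟩ : ∃ z₃, z₃ ∈ B ∧ z₃ ∈ D := by
        obtain ⟨z₃, hz₃⟩ := mem_closure_iff.mp h0D B Metric.isOpen_ball (Metric.mem_ball_self hε)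
        exact ⟨z₃, hz₃.1, hz₃.2⟩
      have hdiff : DifferentiableOn ℂ (fun z => F z - f z * (h z - H z)) B :=
        (hF.mono hBU).sub ((hf.mono hBU).mul ((hh.mono hBW).sub (hH.mono hBU)))
      have heq : ∀ z ∈ B, F z - f z * (h z - H z) = 0 := by
        apply aux_identity Metric.isOpen_ball (convex_ball (0 : Fin n → ℂ) ε).isPreconnected
          hdiff (hD.inter Metric.isOpen_ball) ⟨z₃, hz₃D, hz₃B⟩ (fun z hz => hz.2)
        intro z hz
        have hfz : f z ≠ 0 := hDf z hz.1
        have he := hext z ⟨hBW hz.2, hz.1⟩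
        rw [hGU z (hDU hz.1)] at he
        have h1 : F z / f z = h z - H z := by rw [he]; ring
        have h2 : F z = (h z - H z) * f z := (div_eq_iff hfz).mp h1
        rw [h2]; ring
      intro z hz
      have := heq z hz
      linear_combination this
  · -- otherwise, derive a contradiction via a one-dimensional slice
    exfalso
    push_neg at hcase
    obtain ⟨z₁, ⟨hz₁D, hz₁N⟩, hGz₁⟩ := hcase
    obtain ⟨t₀, ht₀R, ht₀f⟩ := (hN'sub hz₁N).1
    have hz₁half : z₁ ∈ Metric.ball (0 : Fin n → ℂ) (ε / 2) := (hN'sub hz₁N).2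
    set φ : ℂ → (Fin n → ℂ) := fun t => z₁ + t • v with hφdef
    have hφmap : ∀ t : ℂ, ‖t‖ < R → φ t ∈ B := by
      intro t ht
      have h1 : ‖z₁ + t • v‖ ≤ ‖z₁‖ + ‖t‖ * ‖v‖ :=
        (norm_add_le _ _).trans (by rw [norm_smul])
      have hz₁n : ‖z₁‖ < ε / 2 := by simpa [dist_zero_right] using hz₁half
      have h2 : ‖t‖ * ‖v‖ < ε / 2 := by
        calc ‖t‖ * ‖v‖ ≤ ‖t‖ * (‖v‖ + 1) := by nlinarith [norm_nonneg t]
        _ < R * (‖v‖ + 1) := by nlinarith [norm_nonneg t]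
        _ = ε / 2 := div_mul_cancel₀ _ hv1.ne'
      simp only [hBdef, Metric.mem_ball, dist_zero_right]
      calc ‖z₁ + t • v‖ ≤ ‖z₁‖ + ‖t‖ * ‖v‖ := h1
      _ < ε / 2 + ε / 2 := by linarith
      _ = ε := by ring
    set Δ : Set ℂ := Metric.ball (0 : ℂ) R with hΔdef
    have hΔo : IsOpen Δ := Metric.isOpen_ball
    have hΔconn : IsPreconnected Δ := (convex_ball (0 : ℂ) R).isPreconnected
    have hφΔ : ∀ t ∈ Δ, φ t ∈ B := fun t ht => hφmap t (mem_ball_zero_iff.mp ht)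
    have hφd : Differentiable ℂ φ :=
      (differentiable_const _).add (differentiable_id.smul_const v)
    set ft : ℂ → ℂ := fun t => f (φ t) with hftdef
    set Gt : ℂ → ℂ := fun t => G (φ t) with hGtdef
    have hcomp : ∀ {q : (Fin n → ℂ) → ℂ}, DifferentiableOn ℂ q U →
        DifferentiableOn ℂ (fun t => q (φ t)) Δ := fun {q} hq =>
      hq.comp hφd.differentiableOn (fun t ht => hBU (hφΔ t ht))
    have hft : DifferentiableOn ℂ ft Δ := hcomp hf
    have hGt : DifferentiableOn ℂ Gt Δ := hcomp hG
    have hht : DifferentiableOn ℂ (fun t => h (φ t)) Δ :=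
      hh.comp hφd.differentiableOn (fun t ht => hBW (hφΔ t ht))
    have hHt : DifferentiableOn ℂ (fun t => H (φ t)) Δ := hcomp hH
    have hFt : DifferentiableOn ℂ (fun t => F (φ t)) Δ := hcomp hF
    have h0Δ : (0 : ℂ) ∈ Δ := Metric.mem_ball_self hRpos
    have hφ0 : φ 0 = z₁ := by simp [hφdef]
    have hft0 : ft 0 ≠ 0 := by rw [hftdef]; simpa [hφ0] using hDf z₁ hz₁D
    have hGt0 : Gt 0 ≠ 0 := by rw [hGtdef]; simpa [hφ0] using hGz₁
    have ht₀Δ : t₀ ∈ Δ := mem_ball_zero_iff.mpr ht₀R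
    have hftt₀ : ft t₀ = 0 := ht₀f
    have hS : {t | t ∈ Δ ∧ ft t = 0}.Countable := aux_countable_zero hΔo hΔconn hft h0Δ hft0
    have hT : {t | t ∈ Δ ∧ Gt t = 0}.Countable := aux_countable_zero hΔo hΔconn hGt h0Δ hGt0
    set Ω : Set ℂ := Δ \ ({t | t ∈ Δ ∧ ft t = 0} ∪ {t | t ∈ Δ ∧ Gt t = 0}) with hΩdef
    have hΩmem : ∀ t, t ∈ Ω ↔ t ∈ Δ ∧ ft t ≠ 0 ∧ Gt t ≠ 0 := by
      intro t
      simp only [hΩdef, Set.mem_diff, Set.mem_union, Set.mem_setOf_eq]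
      tauto
    have hΩo : IsOpen Ω := by
      have heq : Ω = (Δ ∩ ft ⁻¹' {(0 : ℂ)}ᶜ) ∩ Gt ⁻¹' {(0 : ℂ)}ᶜ := by
        ext t
        simp only [Set.mem_inter_iff, Set.mem_preimage, Set.mem_compl_iff,
          Set.mem_singleton_iff, hΩmem t]
        tauto
      have h1 : IsOpen (Δ ∩ ft ⁻¹' {(0 : ℂ)}ᶜ) :=
        hft.continuousOn.isOpen_inter_preimage hΔo isOpen_compl_singleton
      have h2 : IsOpen ((Δ ∩ ft ⁻¹' {(0 : ℂ)}ᶜ) ∩ Gt ⁻¹' {(0 : ℂ)}ᶜ) :=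
        (hGt.continuousOn.mono Set.inter_subset_left).isOpen_inter_preimage h1
          isOpen_compl_singleton
      rw [heq]; exact h2
    have hΩΔ : Ω ⊆ Δ := Set.diff_subset
    have hΩconn : IsPreconnected Ω := (aux_conn (0 : ℂ) hRpos (hS.union hT)).isPreconnected
    have h0Ω : (0 : ℂ) ∈ Ω := (hΩmem 0).mpr ⟨h0Δ, hft0, hGt0⟩
    set ψ : ℂ → ℂ := fun t => h (φ t) - H (φ t) - F (φ t) / ft t with hψdef
    set g : ℂ → ℂ := fun t => ψ t / Gt t with hgdef
    have hgd : DifferentiableOn ℂ g Ω := by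
      apply DifferentiableOn.div
      · exact ((hht.mono hΩΔ).sub (hHt.mono hΩΔ)).sub
          ((hFt.mono hΩΔ).div (hft.mono hΩΔ) (fun t ht => ((hΩmem t).mp ht).2.1))
      · exact hGt.mono hΩΔ
      · exact fun t ht => ((hΩmem t).mp ht).2.2
    -- the key identity: exp ∘ g = ft on Ω
    have hexpg : Set.EqOn (fun t => Complex.exp (g t)) ft Ω := by
      have hA1 : AnalyticOnNhd ℂ (fun t => Complex.exp (g t)) Ω :=
        (hgd.analyticOnNhd hΩo).cexp
      have hA2 : AnalyticOnNhd ℂ ft Ω := (hft.mono hΩΔ).analyticOnNhd hΩo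
      apply hA1.eqOn_of_preconnected_of_eventuallyEq hA2 hΩconn h0Ω
      have hDop : Ω ∩ φ ⁻¹' D ∈ 𝓝 (0 : ℂ) := by
        apply IsOpen.mem_nhds (hΩo.inter (hD.preimage hφd.continuous))
        exact ⟨h0Ω, by simp only [Set.mem_preimage, hφ0]; exact hz₁D⟩
      filter_upwards [hDop] with t ht
      obtain ⟨htΩ, htD⟩ := ht
      have hφtD : φ t ∈ D := htD
      have hWt : φ t ∈ W := hBW (hφΔ t (hΩΔ htΩ))
      have he := hext (φ t) ⟨hWt, hφtD⟩
      obtain ⟨htΔ, hftne, hGtne⟩ := (hΩmem t).mp htΩ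
      have hψt : ψ t = Gt t * L (φ t) := by
        simp only [hψdef, hftdef, hGtdef]
        rw [he]; ring
      have hgt : g t = L (φ t) := by
        simp only [hgdef]
        rw [hψt, mul_div_cancel_left₀ _ hGtne]
      show Complex.exp (g t) = ft t
      rw [hgt, hLf (φ t) hφtD]
    -- factor ft near its zero t₀
    have hfta : AnalyticOnNhd ℂ ft Δ := hft.analyticOnNhd hΔo
    have hnotev : ¬ ∀ᶠ t in 𝓝 t₀, ft t = 0 := by
      intro hev
      exact hft0 (hfta.eqOn_zero_of_preconnected_of_eventuallyEq_zero hΔconn ht₀Δ hev h0Δ)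
    obtain ⟨m, wf, hwfa, hwf0, hfac⟩ :=
      (hfta t₀ ht₀Δ).exists_eventuallyEq_pow_smul_nonzero_iff.mpr hnotev
    have hm : m ≠ 0 := by
      intro hm0
      have hself := hfac.self_of_nhds
      rw [hm0] at hself
      simp only [pow_zero, one_smul] at hself
      rw [hftt₀] at hself
      exact hwf0 hself.symm
    obtain ⟨k, rfl⟩ := Nat.exists_eq_succ_of_ne_zero hm
    -- a good radius ρ for the circle around t₀
    have hev2 : ∀ᶠ t in 𝓝 t₀, DifferentiableAt ℂ wf t := by
      filter_upwards [hwfa.eventually_analyticAt] with t ht using ht.differentiableAt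
    have hev3 : ∀ᶠ t in 𝓝 t₀, wf t ≠ 0 := hwfa.continuousAt.eventually_ne hwf0
    have hev4 : ∀ᶠ t in 𝓝 t₀, t ∈ Δ := hΔo.mem_nhds ht₀Δ
    obtain ⟨ρ₁, hρ₁pos, hball₁⟩ :=
      Metric.eventually_nhds_iff_ball.mp (hfac.and (hev2.and (hev3.and hev4)))
    obtain ⟨ρ, hρI, hρgood⟩ : ∃ ρ ∈ Set.Ioo (0 : ℝ) ρ₁,
        ρ ∉ (fun x => dist x t₀) '' {t | t ∈ Δ ∧ Gt t = 0} := by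
      by_contra hcon; push_neg at hcon
      have hsub2 : Set.Ioo (0 : ℝ) ρ₁ ⊆ (fun x => dist x t₀) '' {t | t ∈ Δ ∧ Gt t = 0} :=
        fun ρ hρ => hcon ρ hρ
      have hcnt : (Set.Ioo (0 : ℝ) ρ₁).Countable := (hT.image _).mono hsub2
      have h1 := hcnt.measure_zero MeasureTheory.volume
      rw [Real.volume_Ioo] at h1
      rw [ENNReal.ofReal_eq_zero] at h1
      linarith
    obtain ⟨hρpos, hρlt⟩ := hρI
    have hsphball : Metric.sphere t₀ ρ ⊆ Metric.ball t₀ ρ₁ := by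
      intro t ht
      rw [Metric.mem_ball, Metric.mem_sphere.mp ht]
      exact hρlt
    have hsphere : Metric.sphere t₀ ρ ⊆ Ω := by
      intro t ht
      have htd : dist t t₀ = ρ := ht
      have htball : t ∈ Metric.ball t₀ ρ₁ := hsphball ht
      obtain ⟨hfaceq, hwfd, hwfne, htΔ⟩ := hball₁ t htball
      have htne : t ≠ t₀ := by
        intro hteq
        rw [hteq, dist_self] at htd
        linarith
      have hftne : ft t ≠ 0 := by
        rw [hfaceq, smul_eq_mul]
        exact mul_ne_zero (pow_ne_zero _ (sub_ne_zero.mpr htne)) hwfne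
      have hGtne : Gt t ≠ 0 := fun hG0 => hρgood ⟨t, ⟨htΔ, hG0⟩, htd⟩
      exact (hΩmem t).mpr ⟨htΔ, hftne, hGtne⟩
    -- the integral of deriv g over the circle vanishes
    have I1 : (∮ z in C(t₀, ρ), deriv g z) = 0 := aux_circle_deriv_zero hΩo hgd hρpos hsphere
    set q : ℂ → ℂ := fun t => deriv wf t / wf t with hqdef
    have hwfball : DifferentiableOn ℂ wf (Metric.ball t₀ ρ₁) :=
      fun t ht => ((hball₁ t ht).2.1).differentiableWithinAt
    have hwfan : AnalyticOnNhd ℂ wf (Metric.ball t₀ ρ₁) :=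
      hwfball.analyticOnNhd Metric.isOpen_ball
    -- deriv g equals m/(z - t₀) + q on the circle
    have hderiv : Set.EqOn (fun z => deriv g z - q z)
        (fun z => ((k : ℂ) + 1) * (z - t₀)⁻¹) (Metric.sphere t₀ ρ) := by
      intro t ht
      have htΩ : t ∈ Ω := hsphere ht
      obtain ⟨htΔ, hftne, hGtne⟩ := (hΩmem t).mp htΩ
      have htball : t ∈ Metric.ball t₀ ρ₁ := hsphball ht
      have htne : t ≠ t₀ := by
        intro hteq
        have htd : dist t t₀ = ρ := ht
        rw [hteq, dist_self] at htd
        linarith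
      have hsubne : t - t₀ ≠ 0 := sub_ne_zero.mpr htne
      have hgt_diff : DifferentiableAt ℂ g t := hgd.differentiableAt (hΩo.mem_nhds htΩ)
      have hDexp : HasDerivAt (fun z => Complex.exp (g z)) (Complex.exp (g t) * deriv g t) t :=
        (Complex.hasDerivAt_exp (g t)).comp t hgt_diff.hasDerivAt
      have hev : (fun z => Complex.exp (g z)) =ᶠ[𝓝 t] ft :=
        hexpg.eventuallyEq_of_mem (hΩo.mem_nhds htΩ)
      have hftderiv : deriv ft t = Complex.exp (g t) * deriv g t := by
        rw [← hev.deriv_eq, hDexp.deriv]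
      rw [show Complex.exp (g t) = ft t from hexpg htΩ] at hftderiv
      have hevfac : ft =ᶠ[𝓝 t] (fun z => (z - t₀) ^ (k + 1) * wf z) := by
        filter_upwards [Metric.isOpen_ball.mem_nhds htball] with z hz
        have hz1 := (hball₁ z hz).1
        rwa [smul_eq_mul] at hz1
      have hwfd_t : DifferentiableAt ℂ wf t := (hball₁ t htball).2.1
      have hwfne_t : wf t ≠ 0 := (hball₁ t htball).2.2.1
      have hD2 : HasDerivAt (fun z => (z - t₀) ^ (k + 1) * wf z)
          (((k : ℂ) + 1) * (t - t₀) ^ k * wf t + (t - t₀) ^ (k + 1) * deriv wf t) t := by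
        have h1 : HasDerivAt (fun z : ℂ => (z - t₀) ^ (k + 1))
            (((k : ℂ) + 1) * (t - t₀) ^ k) t := by
          have hpow := (hasDerivAt_pow (k + 1) (t - t₀)).comp t
            ((hasDerivAt_id t).sub_const t₀)
          simpa [Function.comp_def] using hpow
        exact h1.mul hwfd_t.hasDerivAt
      have hftd2 : deriv ft t
          = ((k : ℂ) + 1) * (t - t₀) ^ k * wf t + (t - t₀) ^ (k + 1) * deriv wf t := by
        rw [hevfac.deriv_eq, hD2.deriv]
      have hfteq : ft t = (t - t₀) ^ (k + 1) * wf t := by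
        have hz1 := (hball₁ t htball).1
        rwa [smul_eq_mul] at hz1
      have key : (t - t₀) ^ (k + 1) * wf t * deriv g t
          = ((k : ℂ) + 1) * (t - t₀) ^ k * wf t + (t - t₀) ^ (k + 1) * deriv wf t := by
        rw [← hftd2, hftderiv, hfteq]
      have key' : (t - t₀) ^ k * ((t - t₀) * wf t * deriv g t)
          = (t - t₀) ^ k * (((k : ℂ) + 1) * wf t + (t - t₀) * deriv wf t) := by
        linear_combination key
      have key'' := mul_left_cancel₀ (pow_ne_zero k hsubne) key'
      show deriv g t - q t = ((k : ℂ) + 1) * (t - t₀)⁻¹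
      simp only [hqdef]
      field_simp
      linear_combination key''
    -- the circle integral of q vanishes by Cauchy-Goursat
    have hclosed : Metric.closedBall t₀ ρ ⊆ Metric.ball t₀ ρ₁ := by
      intro t ht
      rw [Metric.mem_closedBall] at ht
      rw [Metric.mem_ball]
      linarith
    have hqd : ∀ z ∈ Metric.ball t₀ ρ₁, DifferentiableAt ℂ q z := by
      intro z hz
      have h1 : DifferentiableAt ℂ (deriv wf) z :=
        ((hwfan.deriv) z hz).differentiableAt
      exact h1.div ((hball₁ z hz).2.1) ((hball₁ z hz).2.2.1)
    have hqcont : ContinuousOn q (Metric.closedBall t₀ ρ) :=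
      fun z hz => ((hqd z (hclosed hz)).continuousAt).continuousWithinAt
    have I2 : (∮ z in C(t₀, ρ), q z) = 0 := by
      apply circleIntegral_eq_zero_of_differentiable_on_off_countable hρpos.le
        Set.countable_empty hqcont
      intro z hz
      exact hqd z (hclosed (Metric.ball_subset_closedBall hz.1))
    have hInt1 : CircleIntegrable (deriv g) t₀ ρ := by
      apply ContinuousOn.circleIntegrable hρpos.le
      exact fun z hz => ((((hgd.analyticOnNhd hΩo).deriv) z (hsphere hz)).continuousAt
        ).continuousWithinAt
    have hInt2 : CircleIntegrable q t₀ ρ := by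
      apply ContinuousOn.circleIntegrable hρpos.le
      exact fun z hz => ((hqd z (hclosed (Metric.sphere_subset_closedBall hz))
        ).continuousAt).continuousWithinAt
    have I3 : (∮ z in C(t₀, ρ), (deriv g z - q z)) = 0 := by
      rw [circleIntegral.integral_sub hInt1 hInt2, I1, I2, sub_zero]
    have I4 : (∮ z in C(t₀, ρ), (deriv g z - q z))
        = ((k : ℂ) + 1) * (2 * π * Complex.I) := by
      rw [circleIntegral.integral_congr hρpos.le hderiv]
      have hsmul : (fun z : ℂ => ((k : ℂ) + 1) * (z - t₀)⁻¹)
          = fun z : ℂ => ((k : ℂ) + 1) • (z - t₀)⁻¹ := by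
        funext z; rw [smul_eq_mul]
      rw [hsmul, circleIntegral.integral_smul,
        circleIntegral.integral_sub_inv_of_mem_ball (Metric.mem_ball_self hρpos), smul_eq_mul]
    rw [I3] at I4
    have hπ : (2 * (π : ℂ) * Complex.I) ≠ 0 := by
      simp [Real.pi_ne_zero, Complex.I_ne_zero, Complex.ofReal_ne_zero]
    have hk1 : ((k : ℂ) + 1) ≠ 0 := by
      have : ((k : ℂ) + 1) = ((k + 1 : ℕ) : ℂ) := by push_cast; ring
      rw [this]
      exact_mod_cast Nat.succ_ne_zero k
    exact hπ (by
      have := I4.symm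
      rcases mul_eq_zero.mp this with hc | hc
      · exact absurd hc hk1
      · exact hc)

end
end

section
/- Let $q(z_1,\dots,z_{n-1}) = -\tfrac12 a_n \sum_{j=1}^{n-1} z_j^2$ with $a_1,\dots,a_n \geq 0$ real and $\sum_{j=1}^n a_j^2 < 1$. Then for all $z = (z_1,\dots,z_n) \in \mathbb{C}^n$ with $z \neq 0$: $\sum_{j=1}^n |z_j|^2 - 2\,\mathrm{Re}\big(\sum_{j=1}^{n-1} a_j z_j z_n + \tfrac12 a_n z_n^2 + q(z_1,\dots,z_{n-1})\big) \geq \big(1 - \sqrt{\textstyle\sum_j a_j^2}\big)\|z\|^2 > 0$. -/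
private lemma norm_comb_sq (a b : ℝ) (u v : ℂ) :
    ‖(a:ℂ)*u + (b:ℂ)*v‖^2
      = a^2*‖u‖^2 + b^2*‖v‖^2 + 2*a*b*(u.re*v.re + u.im*v.im) := by
  simp only [Complex.sq_norm, Complex.normSq_apply, Complex.add_re,
    Complex.add_im, Complex.mul_re, Complex.mul_im, Complex.ofReal_re, Complex.ofReal_im]
  ring

/-- Quantitative form of Lemma 2.3 with the explicit choice
`q(z') = -½ a_n ∑_{j<n} z_j²`: for `a_j ≥ 0` with `∑ a_j² < 1` and `z ≠ 0`,
`∑ |z_j|² - 2 Re(∑_{j<n} a_j z_j z_n + ½ a_n z_n² + q(z'))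
  ≥ (1 - √(∑ a_j²)) ‖z‖² > 0`.
Variables are indexed by `Fin (n+1)` with `Fin.last n` playing the role of `n`. -/
theorem quantitative_lemma (n : ℕ) (a : Fin (n + 1) → ℝ)
    (ha : ∀ j, 0 ≤ a j) (hsum : ∑ j, a j ^ 2 < 1)
    (z : Fin (n + 1) → ℂ) (hz : z ≠ 0) :
    (1 - Real.sqrt (∑ j, a j ^ 2)) * (∑ j, ‖z j‖ ^ 2) ≤
      (∑ j, ‖z j‖ ^ 2) -
        2 * ((∑ j : Fin n, (a j.castSucc : ℂ) * z j.castSucc * z (Fin.last n))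
          + (1 / 2) * (a (Fin.last n) : ℂ) * z (Fin.last n) ^ 2
          + (-(1 / 2) * (a (Fin.last n) : ℂ)
              * ∑ j : Fin n, (z j.castSucc) ^ 2)).re
    ∧ 0 < (1 - Real.sqrt (∑ j, a j ^ 2)) * (∑ j, ‖z j‖ ^ 2) := by
  set γ := Real.sqrt (∑ j, a j ^ 2) with hγdef
  set T := ∑ j, ‖z j‖ ^ 2 with hTdef
  set E := (∑ j : Fin n, (a j.castSucc : ℂ) * z j.castSucc * z (Fin.last n))
          + (1 / 2) * (a (Fin.last n) : ℂ) * z (Fin.last n) ^ 2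
          + (-(1 / 2) * (a (Fin.last n) : ℂ)
              * ∑ j : Fin n, (z j.castSucc) ^ 2) with hEdef
  have hT0 : 0 < T := by
    obtain ⟨j, hj⟩ : ∃ j, z j ≠ 0 := by
      by_contra h; push_neg at h; exact hz (funext h)
    exact Finset.sum_pos' (fun i _ => by positivity)
      ⟨j, Finset.mem_univ j, pow_pos (norm_pos_iff.mpr hj) 2⟩
  have hγ0 : 0 ≤ γ := Real.sqrt_nonneg _
  have hγ1 : γ < 1 := by
    rw [hγdef, show (1:ℝ) = Real.sqrt 1 by simp]
    exact Real.sqrt_lt_sqrt (by positivity) hsum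
  set α := a (Fin.last n) with hαdef
  set ζ := z (Fin.last n) with hζdef
  set s : ℂ := ∑ j : Fin n, (a j.castSucc : ℂ) * z j.castSucc with hsdef
  set B := ∑ j : Fin n, a j.castSucc ^ 2 with hBdef
  set P := ∑ j : Fin n, ‖z j.castSucc‖ ^ 2 with hPdef
  have hB0 : 0 ≤ B := Finset.sum_nonneg fun j _ => sq_nonneg _
  have hP0 : 0 ≤ P := Finset.sum_nonneg fun j _ => sq_nonneg _
  have hTsplit : T = P + ‖ζ‖^2 := by rw [hTdef, Fin.sum_univ_castSucc]
  have hγsq : γ^2 = B + α^2 := by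
    rw [hγdef, Real.sq_sqrt (Finset.sum_nonneg fun j _ => sq_nonneg _),
      Fin.sum_univ_castSucc]
  -- the vector w = M z (no conjugation)
  set w : Fin (n+1) → ℂ :=
    Fin.lastCases (s + (α:ℂ)*ζ)
      (fun j => (a j.castSucc : ℂ)*ζ + ((-α : ℝ):ℂ)*z j.castSucc) with hwdef
  have hwcast : ∀ j : Fin n,
      w j.castSucc = (a j.castSucc : ℂ)*ζ + ((-α : ℝ):ℂ)*z j.castSucc := by
    intro j; rw [hwdef]; exact Fin.lastCases_castSucc ..
  have hwlast : w (Fin.last n) = s + (α:ℂ)*ζ := by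
    rw [hwdef]; exact Fin.lastCases_last ..
  -- algebraic identity : 2E = ∑ z_j w_j
  have h2E : 2*E = ∑ j, z j * w j := by
    have expand : ∑ j : Fin n, z j.castSucc *
        ((a j.castSucc:ℂ)*ζ + ((-α:ℝ):ℂ)*z j.castSucc)
        = (∑ j : Fin n, (a j.castSucc:ℂ) * z j.castSucc * ζ)
          - (α:ℂ) * ∑ j : Fin n, (z j.castSucc)^2 := by
      rw [Finset.mul_sum, ← Finset.sum_sub_distrib]
      refine Finset.sum_congr rfl fun j _ => ?_
      push_cast; ring
    have hzs : ζ * s = ∑ j : Fin n, (a j.castSucc:ℂ) * z j.castSucc * ζ := by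
      rw [hsdef, Finset.mul_sum]; exact Finset.sum_congr rfl fun j _ => by ring
    rw [Fin.sum_univ_castSucc]
    simp only [hwcast, hwlast]
    rw [expand, hEdef]
    rw [mul_add (z (Fin.last n)), ← hζdef, hzs]
    ring
  -- Cauchy–Schwarz step 1
  set S1 := ∑ j, ‖z j‖ * ‖w j‖ with hS1def
  have hre : (2*E).re ≤ S1 := by
    calc (2*E).re ≤ ‖2*E‖ := by exact Complex.re_le_norm _
    _ = ‖∑ j, z j * w j‖ := by rw [h2E]
    _ ≤ ∑ j, ‖z j * w j‖ := norm_sum_le _ _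
    _ = S1 := by simp [hS1def, norm_mul]
  have hS10 : 0 ≤ S1 :=
    Finset.sum_nonneg fun j _ => mul_nonneg (norm_nonneg _) (norm_nonneg _)
  set W := ∑ j, ‖w j‖^2 with hWdef
  have hCS : S1^2 ≤ T * W := by
    have := Finset.sum_mul_sq_le_sq_mul_sq Finset.univ
      (fun j => ‖z j‖) (fun j => ‖w j‖)
    simpa [hS1def, hTdef, hWdef] using this
  -- bound on W
  have hs_sq : ‖s‖^2 ≤ B * P := by
    have h1 : ‖s‖ ≤ ∑ j : Fin n, a j.castSucc * ‖z j.castSucc‖ := by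
      refine (norm_sum_le _ _).trans_eq (Finset.sum_congr rfl fun j _ => ?_)
      rw [norm_mul, Complex.norm_real, Real.norm_eq_abs, abs_of_nonneg (ha _)]
    have h2 : (∑ j : Fin n, a j.castSucc * ‖z j.castSucc‖)^2 ≤ B * P := by
      simpa [hBdef, hPdef] using Finset.sum_mul_sq_le_sq_mul_sq Finset.univ
        (fun j : Fin n => a j.castSucc) (fun j => ‖z j.castSucc‖)
    calc ‖s‖^2 ≤ (∑ j : Fin n, a j.castSucc * ‖z j.castSucc‖)^2 := by
          apply pow_le_pow_left₀ (norm_nonneg _) h1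
    _ ≤ B * P := h2
  have hW_le : W ≤ γ^2 * T := by
    have hWsplit : W = B*‖ζ‖^2 + α^2*P + ‖s‖^2 + α^2*‖ζ‖^2 := by
      rw [hWdef, Fin.sum_univ_castSucc, hwlast]
      have hterm : ∀ j : Fin n, ‖w j.castSucc‖^2
          = a j.castSucc^2*‖ζ‖^2 + α^2*‖z j.castSucc‖^2
            + 2*(a j.castSucc)*(-α)*(ζ.re*(z j.castSucc).re + ζ.im*(z j.castSucc).im) := by
        intro j
        rw [hwcast j, norm_comb_sq (a j.castSucc) (-α) ζ (z j.castSucc)]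
        ring
      have hlast : ‖s + (α:ℂ)*ζ‖^2
          = ‖s‖^2 + α^2*‖ζ‖^2 + 2*α*(s.re*ζ.re + s.im*ζ.im) := by
        have := norm_comb_sq 1 α s ζ
        simpa using this
      have hsre : s.re = ∑ j : Fin n, a j.castSucc * (z j.castSucc).re := by
        rw [hsdef, Complex.re_sum]
        exact Finset.sum_congr rfl fun j _ => by simp [Complex.mul_re]
      have hsim : s.im = ∑ j : Fin n, a j.castSucc * (z j.castSucc).im := by
        rw [hsdef, Complex.im_sum]
        exact Finset.sum_congr rfl fun j _ => by simp [Complex.mul_im]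
      simp only [hterm]
      have hcross : ∑ j : Fin n, 2 * a j.castSucc * -α
            * (ζ.re * (z j.castSucc).re + ζ.im * (z j.castSucc).im)
          = -(2 * α * ((∑ j : Fin n, a j.castSucc * (z j.castSucc).re) * ζ.re
            + (∑ j : Fin n, a j.castSucc * (z j.castSucc).im) * ζ.im)) := by
        have h : ∀ j : Fin n, 2 * a j.castSucc * -α
              * (ζ.re * (z j.castSucc).re + ζ.im * (z j.castSucc).im)
            = (-(2 * α * ζ.re)) * (a j.castSucc * (z j.castSucc).re)
              + (-(2 * α * ζ.im)) * (a j.castSucc * (z j.castSucc).im) := fun j => by ring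
        simp only [h]
        rw [Finset.sum_add_distrib, ← Finset.mul_sum, ← Finset.mul_sum]
        ring
      rw [Finset.sum_add_distrib, Finset.sum_add_distrib, hlast, hsre, hsim,
        ← Finset.sum_mul, ← hBdef, ← Finset.mul_sum, ← hPdef, hcross]
      ring
    nlinarith [hs_sq]
  have hS1γT : S1 ≤ γ * T := by
    nlinarith [hCS, hW_le, hS10, hT0, mul_nonneg hγ0 hT0.le]
  have h2Ere : (2*E).re = 2 * E.re := by simp
  have hfinal : 2 * E.re ≤ γ * T := by linarith [hre, hS1γT]
  constructor
  · nlinarith [hfinal]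
  · exact mul_pos (by linarith) hT0
end
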